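/- arXiv:2508.03947 — 8 statements merged into one kernel-verified Lean document; each statement's English description precedes it below -/
import Mathlib

section
/- Let R ⊆ A × A be a relation such that its transitive closure R⁺ is contained in a finite union R₁ ∪ ⋯ ∪ R_m, where each Rᵢ is well-founded (admits no infinite chain a : ℕ → A with (a_j, a_{j+1}) ∈ Rᵢ for all j). Then R itself is well-founded, i.e., there is no infinite sequence a : ℕ → A with (a_j, a_{j+1}) ∈ R for all j. -/
/-! Along an infinite `R`-chain `a`, every pair `a i, a j` with `i < j` is related by `R⁺`, hence
by some `Rₖ`. Ramsey's theorem for this finite colouring of pairs yields an infinite subsequence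
whose consecutive pairs all carry the same colour `k`, which is an infinite `Rₖ`-chain. -/

section Ramsey

variable {ι α : Type*}

/-- Infinite Ramsey for pairs, removing one colour at a time: each step is the two-colour case
`exists_increasing_or_nonincreasing_subseq'`. -/
theorem Finset.exists_orderEmbedding_forall_rel_succ (s : Finset ι) (r : ι → α → α → Prop)
    (a : ℕ → α) (h : ∀ i j, i < j → ∃ k ∈ s, r k (a i) (a j)) :
    ∃ k ∈ s, ∃ g : ℕ ↪o ℕ, ∀ n, r k (a (g n)) (a (g (n + 1))) := by
  classical
  induction s using Finset.induction_on generalizing a with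
  | empty => simpa using h 0 1 Nat.one_pos
  | insert k s _ ih =>
    obtain ⟨g, hchain | hnot⟩ := exists_increasing_or_nonincreasing_subseq' (r k) a
    · exact ⟨k, Finset.mem_insert_self k s, g, hchain⟩
    · have hs : ∀ i j, i < j → ∃ k' ∈ s, r k' (a (g i)) (a (g j)) := by
        intro i j hij
        obtain ⟨k', hk', hr⟩ := h _ _ (g.strictMono hij)
        rcases Finset.mem_insert.mp hk' with rfl | hk's
        · exact absurd hr (hnot i j hij)
        · exact ⟨k', hk's, hr⟩
      obtain ⟨k', hk', g', hg'⟩ := ih (a ∘ g) hs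
      exact ⟨k', Finset.mem_insert_of_mem hk', g'.trans g, hg'⟩

theorem exists_orderEmbedding_forall_rel_succ [Finite ι] (r : ι → α → α → Prop) (a : ℕ → α)
    (h : ∀ i j, i < j → ∃ k, r k (a i) (a j)) :
    ∃ k, ∃ g : ℕ ↪o ℕ, ∀ n, r k (a (g n)) (a (g (n + 1))) := by
  have := Fintype.ofFinite ι
  obtain ⟨k, -, hk⟩ := Finset.univ.exists_orderEmbedding_forall_rel_succ r a
    fun i j hij => (h i j hij).imp fun k hk => ⟨Finset.mem_univ k, hk⟩
  exact ⟨k, hk⟩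

end Ramsey

theorem podelski_rybalchenko {A : Type*} (R : A → A → Prop) (m : ℕ)
    (Rs : Fin m → A → A → Prop)
    (hsub : ∀ x y, Relation.TransGen R x y → ∃ k, Rs k x y)
    (hwf : ∀ k : Fin m, ¬ ∃ a : ℕ → A, ∀ j, Rs k (a j) (a (j + 1))) :
    ¬ ∃ a : ℕ → A, ∀ j, R (a j) (a (j + 1)) := by
  rintro ⟨a, ha⟩
  have hcolour : ∀ i j, i < j → ∃ k, Rs k (a i) (a j) := fun i j hij =>
    hsub _ _ (Nat.rel_of_forall_rel_succ_of_lt _ (fun n => .single (ha n)) hij)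
  obtain ⟨k, g, hg⟩ := exists_orderEmbedding_forall_rel_succ Rs a hcolour
  exact hwf k ⟨a ∘ g, hg⟩
end

section
/- Consider a dynamical system with state set X, initial set X₀ ⊆ X, and transition function f : X → X, and a set X_VF ⊆ X partitioned into X_VF = ⋃_{i=1}^p X_VF_i. Suppose there exist a function T : X × X → ℝ and, for each 1 ≤ i ≤ p, a function V_i : X × X → ℝ bounded from below and a constant ξ_i > 0, such that: (1) T(x, f(x)) ≥ 0 for all x ∈ X; (2) for all x, y ∈ X, T(f(x), y) ≥ 0 implies T(x, y) ≥ 0; and (3) for all x₀ ∈ X₀, all 1 ≤ i ≤ p, and all z, z' ∈ X_VF_i, if T(x₀, z) ≥ 0 and T(z, z') ≥ 0 then V_i(x₀, z') ≤ V_i(x₀, z) − ξ_i. Then every trajectory ⟨x₀, x₁, …⟩ with x₀ ∈ X₀ and x_{k+1} = f(x_k) visits X_VF only finitely often, i.e., there are only finitely many indices k with x_k ∈ X_VF. -/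
/-!
By induction, conditions (1) and (2) give `T (x_k, x_l) ≥ 0` whenever `k < l`; in particular
`T (x₀, x_k) ≥ 0` for `k > 0`. Condition (3) then makes `V_i (x₀, ·)` drop by at least `ξ_i`
between any two later visits to `X_VF_i`, so a bounded-below `V_i` allows only finitely many of
them. As there are finitely many pieces, `X_VF` is visited finitely often.
-/

section IterateRel

variable {X : Type*} {f : X → X} {R : X → X → Prop}

theorem rel_iterate_succ (hf : ∀ x, R x (f x)) (hR : ∀ x y, R (f x) y → R x y) :
    ∀ (m : ℕ) (x : X), R x (f^[m + 1] x)
  | 0, x => hf x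
  | m + 1, x => hR _ _ <| by
    simpa only [Function.iterate_succ_apply] using rel_iterate_succ hf hR m (f x)

theorem rel_iterate_of_lt (hf : ∀ x, R x (f x)) (hR : ∀ x y, R (f x) y → R x y) (x : X)
    {k l : ℕ} (hkl : k < l) : R (f^[k] x) (f^[l] x) := by
  obtain ⟨m, rfl⟩ : ∃ m, l = m + 1 + k := ⟨l - k - 1, by omega⟩
  rw [Function.iterate_add_apply]
  exact rel_iterate_succ hf hR m _

end IterateRel

theorem Set.finite_of_le_sub_of_bddBelow {α : Type*} [AddCommGroup α] [LinearOrder α]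
    [IsOrderedAddMonoid α] [Archimedean α] {S : Set ℕ} {u : ℕ → α} {ξ : α} (hξ : 0 < ξ)
    (hu : BddBelow (u '' S)) (hdec : ∀ k ∈ S, ∀ l ∈ S, k < l → u l ≤ u k - ξ) : S.Finite := by
  by_contra hS
  replace hS : S.Infinite := hS
  obtain ⟨k₀, hk₀⟩ := hS.nonempty
  have hdrop : ∀ n : ℕ, ∃ k ∈ S, u k ≤ u k₀ - n • ξ := by
    intro n
    induction n with
    | zero => exact ⟨k₀, hk₀, by simp⟩
    | succ n ih =>
      obtain ⟨k, hk, hku⟩ := ih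
      obtain ⟨l, hl, hkl⟩ := hS.exists_gt k
      refine ⟨l, hl, ?_⟩
      calc u l ≤ u k - ξ := hdec k hk l hl hkl
        _ ≤ u k₀ - n • ξ - ξ := sub_le_sub_right hku ξ
        _ = u k₀ - (n + 1) • ξ := by rw [succ_nsmul, sub_sub]
  obtain ⟨b, hb⟩ := hu
  obtain ⟨n, hn⟩ := exists_lt_nsmul hξ (u k₀ - b)
  obtain ⟨k, hk, hku⟩ := hdrop n
  have hbk : n • ξ ≤ u k₀ - b := le_sub_comm.mp ((hb ⟨k, hk, rfl⟩).trans hku)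
  exact hn.not_ge hbk

theorem closure_certificate_finite_visits {X : Type*} (X₀ : Set X) (f : X → X)
    (p : ℕ) (XVF : Fin p → Set X)
    (T : X → X → ℝ) (V : Fin p → X → X → ℝ) (ξ : Fin p → ℝ)
    (hξ : ∀ i, ξ i > 0)
    (hbdd : ∀ i : Fin p, ∃ l : ℝ, ∀ x y : X, l ≤ V i x y)
    (h1 : ∀ x : X, T x (f x) ≥ 0)
    (h2 : ∀ x y : X, T (f x) y ≥ 0 → T x y ≥ 0)
    (h3 : ∀ x₀ ∈ X₀, ∀ i : Fin p, ∀ z ∈ XVF i, ∀ z' ∈ XVF i,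
      T x₀ z ≥ 0 → T z z' ≥ 0 → V i x₀ z' ≤ V i x₀ z - ξ i) :
    ∀ x₀ ∈ X₀, {k : ℕ | f^[k] x₀ ∈ ⋃ i, XVF i}.Finite := by
  intro x₀ hx₀
  have hT : ∀ {k l : ℕ}, k < l → T (f^[k] x₀) (f^[l] x₀) ≥ 0 :=
    rel_iterate_of_lt (R := fun x y => T x y ≥ 0) h1 h2 x₀
  have hvisits : ∀ i, {k | 0 < k ∧ f^[k] x₀ ∈ XVF i}.Finite := by
    intro i
    obtain ⟨l, hl⟩ := hbdd i
    refine Set.finite_of_le_sub_of_bddBelow (u := fun k => V i x₀ (f^[k] x₀)) (hξ i)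
      ⟨l, ?_⟩ ?_
    · rintro _ ⟨k, -, rfl⟩
      exact hl _ _
    · rintro k ⟨hk, hkX⟩ m ⟨-, hmX⟩ hkm
      exact h3 x₀ hx₀ i _ hkX _ hmX (hT hk) (hT hkm)
  refine ((Set.finite_iUnion hvisits).insert 0).subset ?_
  rintro (_ | k) ⟨_, ⟨i, rfl⟩, hk⟩
  · exact Set.mem_insert 0 _
  · exact Set.mem_insert_of_mem 0 (Set.mem_iUnion.mpr ⟨i, k.succ_pos, hk⟩)
end

section
/- Consider a control system with state set X, initial set X₀ ⊆ X, input set U, and transition function f : X × U → X, and a set X_VF ⊆ X partitioned into X_VF = ⋃_{i=1}^p X_VF_i. Suppose there exist T : X × X → ℝ and bounded-from-below functions V_i : X × X → ℝ with constants ξ_i > 0 (1 ≤ i ≤ p) such that: (1) for all x ∈ X there exists u ∈ U with T(x, f(x,u)) ≥ 0; (2) for all x, y ∈ X and all u ∈ U, if T(x, f(x,u)) ≥ 0 and T(f(x,u), y) ≥ 0 then T(x, y) ≥ 0; (3) for all x₀ ∈ X₀, all i, and all z, z' ∈ X_VF_i, if T(x₀, z) ≥ 0 and T(z, z') ≥ 0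 then V_i(x₀, z') ≤ V_i(x₀, z) − ξ_i. Then there exists a state-feedback controller κ : X → U (choosing at each state x an input u with T(x, f(x,u)) ≥ 0) under which every closed-loop trajectory starting in X₀ visits X_VF only finitely often. -/
/-!
Along a closed-loop trajectory under a controller that keeps `T (x, f (x, κ x)) ≥ 0`, the
composition property (2) makes `T (x_j, x_k) ≥ 0` for all `j < k`. Hence any two visits
`x_m, x_n ∈ X_VF_i` with `0 < m < n` satisfy the hypotheses of (3) (the visit at time `0` is
excluded, as `T (x₀, x₀) ≥ 0` may fail), so `V_i (x₀, ·)` drops by at least `ξ_i` from one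
visit to the next. A function bounded from below cannot do this infinitely often, so each `X_VF_i` is visited finitely often, and so is their finite union.
-/

/-- Closed-loop trajectory of a control system under a state-feedback controller. -/
def trajCL {X U : Type*} (f : X → U → X) (κ : X → U) (x₀ : X) : ℕ → X
  | 0 => x₀
  | k + 1 => f (trajCL f κ x₀ k) (κ (trajCL f κ x₀ k))

theorem Set.finite_of_forall_lt_le_sub {S : Set ℕ} {g : ℕ → ℝ} {ξ l : ℝ} (hξ : 0 < ξ)
    (hl : ∀ k ∈ S, l ≤ g k) (hdec : ∀ m ∈ S, ∀ n ∈ S, m < n → g n ≤ g m - ξ) : S.Finite := by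
  by_contra hS
  obtain ⟨k₀, hk₀⟩ := Set.Infinite.nonempty hS
  have hdrop : ∀ n : ℕ, ∃ k ∈ S, g k ≤ g k₀ - n * ξ := by
    intro n
    induction n with
    | zero => exact ⟨k₀, hk₀, by simp⟩
    | succ n ih =>
      obtain ⟨k, hk, hgk⟩ := ih
      obtain ⟨k', hk', hkk'⟩ := Set.Infinite.exists_gt hS k
      refine ⟨k', hk', ?_⟩
      have := hdec k hk k' hk' hkk'
      push_cast
      linarith
  obtain ⟨n, hn⟩ := exists_nat_gt ((g k₀ - l) / ξ)
  obtain ⟨k, hk, hgk⟩ := hdrop n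
  have := hl k hk
  rw [div_lt_iff₀ hξ] at hn
  linarith

section ClosedLoop

variable {X U : Type*} {f : X → U → X} {κ : X → U} {T : X → X → ℝ}

theorem trajCL_nonneg_of_lt (hκ : ∀ x, T x (f x (κ x)) ≥ 0)
    (hcomp : ∀ x y : X, ∀ u : U, T x (f x u) ≥ 0 → T (f x u) y ≥ 0 → T x y ≥ 0)
    (x₀ : X) {j k : ℕ} (hjk : j < k) : T (trajCL f κ x₀ j) (trajCL f κ x₀ k) ≥ 0 := by
  obtain ⟨d, rfl⟩ := Nat.exists_eq_add_of_lt hjk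
  induction d generalizing j with
  | zero => exact hκ _
  | succ d ih =>
    have hnext := ih (j := j + 1) (by omega)
    rw [show j + 1 + d + 1 = j + (d + 1) + 1 by omega] at hnext
    exact hcomp _ _ _ (hκ _) hnext

end ClosedLoop

theorem control_closure_certificate_finite_visits {X U : Type*} (X₀ : Set X)
    (f : X → U → X) (p : ℕ) (XVF : Fin p → Set X)
    (T : X → X → ℝ) (V : Fin p → X → X → ℝ) (ξ : Fin p → ℝ)
    (hξ : ∀ i, ξ i > 0)
    (hbdd : ∀ i : Fin p, ∃ l : ℝ, ∀ x y : X, l ≤ V i x y)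
    (h1 : ∀ x : X, ∃ u : U, T x (f x u) ≥ 0)
    (h2 : ∀ x y : X, ∀ u : U, T x (f x u) ≥ 0 → T (f x u) y ≥ 0 → T x y ≥ 0)
    (h3 : ∀ x₀ ∈ X₀, ∀ i : Fin p, ∀ z ∈ XVF i, ∀ z' ∈ XVF i,
      T x₀ z ≥ 0 → T z z' ≥ 0 → V i x₀ z' ≤ V i x₀ z - ξ i) :
    ∃ κ : X → U, (∀ x : X, T x (f x (κ x)) ≥ 0) ∧
      ∀ x₀ ∈ X₀, {k : ℕ | trajCL f κ x₀ k ∈ ⋃ i, XVF i}.Finite := by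
  choose κ hκ using h1
  refine ⟨κ, hκ, fun x₀ hx₀ => ?_⟩
  have hvisits : ∀ i, {k | 0 < k ∧ trajCL f κ x₀ k ∈ XVF i}.Finite := fun i =>
    have ⟨l, hl⟩ := hbdd i
    Set.finite_of_forall_lt_le_sub (hξ i) (fun _ _ => hl _ _)
      fun m hm n hn hmn => h3 x₀ hx₀ i _ hm.2 _ hn.2
        (trajCL_nonneg_of_lt hκ h2 x₀ hm.1) (trajCL_nonneg_of_lt hκ h2 x₀ hmn)
  refine ((Set.finite_iUnion hvisits).insert 0).subset fun k hk => ?_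
  obtain ⟨i, hi⟩ := Set.mem_iUnion.mp hk
  rcases Nat.eq_zero_or_pos k with rfl | hpos
  · exact Set.mem_insert 0 _
  · exact Set.mem_insert_of_mem 0 (Set.mem_iUnion.mpr ⟨i, hpos, hi⟩)
end

section
/- Consider a dynamical system (X, X₀, f) with f : X → X and a set X_INF ⊆ X. Suppose there exist T : (X × ℕ) × (X × ℕ) → ℝ and V : X × X × ℕ → ℝ such that for each j ∈ ℕ there is a lower bound l_j with l_j ≤ V(x, y, j) for all x, y, and a constant ξ_j > 0, satisfying: (1) for all x ∈ X and j ∈ ℕ, T((x,j), (f(x), k)) ≥ 0 where k = j+1 if x ∈ X_INF and k = j otherwise; (2) for all x, y ∈ X and j ≤ ℓ, if T((x,j), (f(x), k)) ≥ 0 and T((f(x), k), (y, ℓ)) ≥ 0 then T((x,j), (y, ℓ)) ≥ 0, with k as above; (3) for all x₀ ∈ X₀, j ∈ ℕ, and z, z' ∈ X \ X_INF, if T((x₀,0), (z,j)) ≥ 0 and T((z,j), (z',j)) ≥ 0 then V(x₀, z', j) ≤ V(x₀, z, j) − ξ_j. Then every trajectory starting in X₀ visits X_INF infinitely often. -/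
/-!
Run the augmented system `(x, j) ↦ (f x, j + [x ∈ X_INF])` from `(x₀, 0)`. Conditions (1) and (2)
make every later augmented state `T`-reachable from `(x₀, 0)`. If `X_INF` were visited only
finitely often, the counter would freeze at some value `j`; from then on condition (3) makes
`V x₀ · j` drop by `ξ j > 0` at every step along the trajectory, contradicting the lower bound `l j`.
-/

open Function

theorem exists_lt_of_forall_succ_le_sub {u : ℕ → ℝ} {ξ : ℝ} (hξ : 0 < ξ)
    (hdec : ∀ k, u (k + 1) ≤ u k - ξ) (l : ℝ) : ∃ k, u k < l := by
  have hlin : ∀ k : ℕ, u k ≤ u 0 - k * ξ := by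
    intro k
    induction k with
    | zero => simp
    | succ k ih => push_cast; linarith [hdec k]
  obtain ⟨k, hk⟩ := exists_nat_gt ((u 0 - l) / ξ)
  rw [div_lt_iff₀ hξ] at hk
  exact ⟨k, by linarith [hlin k]⟩

theorem monotone_comp_iterate {α β : Type*} [Preorder β] {F : α → α} {κ : α → β}
    (hκ : ∀ p, κ p ≤ κ (F p)) (p : α) : Monotone fun n => κ (F^[n] p) :=
  monotone_nat_of_le_succ fun n => by
    rw [iterate_succ_apply' F n]
    exact hκ _

theorem rel_iterate_succ_s10 {α β : Type*} [Preorder β] {F : α → α} {κ : α → β}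
    (hκ : ∀ p, κ p ≤ κ (F p)) {R : α → α → Prop} (hstep : ∀ p, R p (F p))
    (hback : ∀ p q, κ p ≤ κ q → R (F p) q → R p q) (n : ℕ) (p : α) :
    R p (F^[n + 1] p) := by
  induction n generalizing p with
  | zero => exact hstep p
  | succ n ih =>
    exact hback p _ (monotone_comp_iterate hκ p (Nat.zero_le (n + 2))) (ih (F p))

section Augmented

variable {X : Type*} (f : X → X) (S : Set X) [DecidablePred (· ∈ S)]

def augStep (p : X × ℕ) : X × ℕ :=
  (f p.1, if p.1 ∈ S then p.2 + 1 else p.2)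

variable {f S}

theorem le_augStep_snd (p : X × ℕ) : p.2 ≤ (augStep f S p).2 := by
  unfold augStep
  split_ifs <;> omega

theorem iterate_augStep_fst (p : X × ℕ) (n : ℕ) : ((augStep f S)^[n] p).1 = f^[n] p.1 := by
  induction n with
  | zero => rfl
  | succ n ih => rw [iterate_succ_apply', iterate_succ_apply', ← ih]; rfl

theorem iterate_augStep_snd_eq_of_not_mem {p : X × ℕ} {M : ℕ}
    (hM : ∀ n ≥ M, f^[n] p.1 ∉ S) {n : ℕ} (hn : M ≤ n) :
    ((augStep f S)^[n] p).2 = ((augStep f S)^[M] p).2 := by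
  induction n, hn using Nat.le_induction with
  | base => rfl
  | succ n hn ih =>
    rw [iterate_succ_apply', ← ih]
    simp only [augStep, iterate_augStep_fst, if_neg (hM n hn)]

end Augmented

theorem counter_closure_certificate_infinite_visits {X : Type*} (X₀ : Set X)
    (f : X → X) (XINF : Set X) [DecidablePred (· ∈ XINF)]
    (T : (X × ℕ) → (X × ℕ) → ℝ) (V : X → X → ℕ → ℝ)
    (l : ℕ → ℝ) (ξ : ℕ → ℝ)
    (hbdd : ∀ j : ℕ, ∀ x y : X, l j ≤ V x y j)
    (hξ : ∀ j : ℕ, ξ j > 0)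
    (h1 : ∀ (x : X) (j : ℕ),
      T (x, j) (f x, if x ∈ XINF then j + 1 else j) ≥ 0)
    (h2 : ∀ (x y : X) (j ℓ : ℕ), j ≤ ℓ →
      T (x, j) (f x, if x ∈ XINF then j + 1 else j) ≥ 0 →
      T (f x, if x ∈ XINF then j + 1 else j) (y, ℓ) ≥ 0 →
      T (x, j) (y, ℓ) ≥ 0)
    (h3 : ∀ x₀ ∈ X₀, ∀ (j : ℕ), ∀ z ∈ Set.univ \ XINF, ∀ z' ∈ Set.univ \ XINF,
      T (x₀, 0) (z, j) ≥ 0 → T (z, j) (z', j) ≥ 0 →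
      V x₀ z' j ≤ V x₀ z j - ξ j) :
    ∀ x₀ ∈ X₀, {k : ℕ | f^[k] x₀ ∈ XINF}.Infinite := by
  intro x₀ hx₀
  by_contra hfin
  rw [← Nat.frequently_atTop_iff_infinite, Filter.not_frequently, Filter.eventually_atTop] at hfin
  obtain ⟨N, hN⟩ := hfin
  set F := augStep f XINF
  set j := (F^[N + 1] (x₀, 0)).2
  have hstate : ∀ k, F^[N + 1 + k] (x₀, 0) = (f^[N + 1 + k] x₀, j) := fun k =>
    Prod.ext (iterate_augStep_fst _ _)
      (iterate_augStep_snd_eq_of_not_mem (fun n hn => hN n (by omega)) (by omega))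
  have hreach : ∀ n, T (x₀, 0) (F^[n + 1] (x₀, 0)) ≥ 0 := fun n =>
    rel_iterate_succ_s10 (R := fun p q => T p q ≥ 0) le_augStep_snd (fun p => h1 p.1 p.2)
      (fun p q hpq => h2 p.1 q.1 p.2 q.2 hpq (h1 p.1 p.2)) n _
  have hdec : ∀ k, V x₀ (f^[N + 1 + (k + 1)] x₀) j ≤ V x₀ (f^[N + 1 + k] x₀) j - ξ j := by
    intro k
    refine h3 x₀ hx₀ j _ ⟨trivial, hN _ (by omega)⟩ _ ⟨trivial, hN _ (by omega)⟩ ?_ ?_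
    · rw [← hstate, Nat.add_right_comm]
      exact hreach (N + k)
    · rw [← hstate, ← hstate, ← Nat.add_assoc, iterate_succ_apply']
      exact h1 _ _
  obtain ⟨k, hk⟩ :=
    exists_lt_of_forall_succ_le_sub (u := fun k => V x₀ (f^[N + 1 + k] x₀) j) (hξ j) hdec (l j)
  exact (hbdd j x₀ _).not_gt hk
end

section
/- Let c : Q → ℕ be a priority function on a finite set Q and ρ : ℕ → Q an infinite sequence. For every state q with c(q) odd, suppose either (a) q occurs only finitely often in ρ, or (b) some q' with c(q') even and c(q') < c(q) occurs infinitely often in ρ. Then ρ satisfies the min-even parity condition: min{c(q) : q ∈ Inf(ρ)} is even. -/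
/-!
Since `Q` is finite, some state occurs infinitely often, so the minimum priority over `Inf(ρ)` is
attained. If it were odd, condition (a) fails for a minimizing state, so (b) supplies a state of
`Inf(ρ)` with a strictly smaller priority, contradicting minimality.
-/

theorem Nat.even_sInf_of_forall_odd_exists_lt {s : Set ℕ} (hs : s.Nonempty)
    (h : ∀ n ∈ s, Odd n → ∃ m ∈ s, m < n) : Even (sInf s) := by
  by_contra hodd
  obtain ⟨m, hm, hlt⟩ := h _ (Nat.sInf_mem hs) (Nat.not_even_iff_odd.mp hodd)
  exact (Nat.sInf_le hm).not_gt hlt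

/-- `Inf(ρ)`: the states visited infinitely often by `ρ`. -/
def infOccurrences {Q : Type*} (ρ : ℕ → Q) : Set Q :=
  {q | {n : ℕ | ρ n = q}.Infinite}

theorem infOccurrences_nonempty {Q : Type*} [Finite Q] (ρ : ℕ → Q) :
    (infOccurrences ρ).Nonempty := by
  obtain ⟨q, hq⟩ := Finite.exists_infinite_fiber ρ
  exact ⟨q, Set.infinite_coe_iff.mp hq⟩

theorem parity_min_even_sound {Q : Type*} [Fintype Q] (c : Q → ℕ) (ρ : ℕ → Q)
    (h : ∀ q : Q, Odd (c q) →
      {n : ℕ | ρ n = q}.Finite ∨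
        ∃ q' : Q, Even (c q') ∧ c q' < c q ∧ {n : ℕ | ρ n = q'}.Infinite) :
    Even (sInf (c '' {q : Q | {n : ℕ | ρ n = q}.Infinite})) := by
  refine Nat.even_sInf_of_forall_odd_exists_lt ((infOccurrences_nonempty ρ).image c) ?_
  rintro _ ⟨q, hq, rfl⟩ hodd
  rcases h q hodd with hfin | ⟨q', -, hlt, hq'⟩
  · exact absurd hfin hq
  · exact ⟨c q', ⟨q', hq', rfl⟩, hlt⟩
end

section
/- Let X be a set, f : X → X, X₀ ⊆ X, and T : X × X → ℝ satisfy T(x, f(x)) ≥ 0 for all x ∈ X and, for all x, y ∈ X, T(f(x), y) ≥ 0 implies T(x, y) ≥ 0. Suppose further there exist X_INF ⊆ X and ξ > 0 such that for all x₀ ∈ X₀ and y ∈ X \ X_INF, if T(x₀, y) ≥ 0 and T(y, f(y)) ≥ 0 then T(x₀, f(y)) ≥ T(x₀, y) + ξ. If additionally T is bounded from above, then every trajectory starting in X₀ visits X_INF infinitely often. -/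
/-!
Chaining the second condition backwards from `T (f^[n] x, f^[n+1] x) ≥ 0` gives `T (x, f^[n+1] x) ≥ 0`
for every `n`, so the third condition applies at every step of a trajectory that stays outside `X_INF`.
If a trajectory from `x₀ ∈ X₀` left `X_INF` for good, `T (x₀, ·)` would then grow by `ξ` per step,
contradicting the upper bound on `T`.
-/

theorem not_bddAbove_range_of_add_le {a : ℕ → ℝ} {ξ : ℝ} (hξ : 0 < ξ)
    (ha : ∀ n, a n + ξ ≤ a (n + 1)) : ¬ BddAbove (Set.range a) := by
  have hlin : ∀ n : ℕ, a 0 + n * ξ ≤ a n := by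
    intro n
    induction n with
    | zero => simp
    | succ n ih => push_cast; linarith [ha n]
  rintro ⟨u, hu⟩
  obtain ⟨n, hn⟩ := exists_nat_gt ((u - a 0) / ξ)
  rw [div_lt_iff₀ hξ] at hn
  linarith [hlin n, hu (Set.mem_range_self n)]

theorem nonneg_apply_iterate_succ {X : Type*} {f : X → X} {T : X → X → ℝ}
    (h1 : ∀ x, T x (f x) ≥ 0) (h2 : ∀ x y, T (f x) y ≥ 0 → T x y ≥ 0) :
    ∀ n x, T x (f^[n + 1] x) ≥ 0
  | 0, x => h1 x
  | n + 1, x => h2 x _ (nonneg_apply_iterate_succ h1 h2 n (f x))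

theorem recurrence_closure_certificate {X : Type*} (X₀ : Set X) (f : X → X)
    (T : X → X → ℝ) (XINF : Set X) (ξ : ℝ) (hξ : ξ > 0)
    (h1 : ∀ x : X, T x (f x) ≥ 0)
    (h2 : ∀ x y : X, T (f x) y ≥ 0 → T x y ≥ 0)
    (h3 : ∀ x₀ ∈ X₀, ∀ y ∈ Set.univ \ XINF,
      T x₀ y ≥ 0 → T y (f y) ≥ 0 → T x₀ (f y) ≥ T x₀ y + ξ)
    (hbdd : ∃ u : ℝ, ∀ x y : X, T x y ≤ u) :
    ∀ x₀ ∈ X₀, {k : ℕ | f^[k] x₀ ∈ XINF}.Infinite := by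
  intro x₀ hx₀
  refine Set.infinite_of_forall_exists_gt fun N => ?_
  by_contra! hvisits_le
  have hstep : ∀ n, T x₀ (f^[n + N + 1] x₀) + ξ ≤ T x₀ (f^[n + 1 + N + 1] x₀) := by
    intro n
    have hy : f^[n + N + 1] x₀ ∈ Set.univ \ XINF :=
      ⟨trivial, fun hmem => (hvisits_le _ hmem).not_gt (by omega)⟩
    have := h3 x₀ hx₀ _ hy (nonneg_apply_iterate_succ h1 h2 _ x₀) (h1 _)
    rwa [← Function.iterate_succ_apply' f, show (n + N + 1).succ = n + 1 + N + 1 by omega] at this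
  obtain ⟨u, hu⟩ := hbdd
  exact not_bddAbove_range_of_add_le hξ hstep ⟨u, by rintro _ ⟨n, rfl⟩; exact hu _ _⟩
end

section
/- There exists a set X, a function f : X → X, an initial state x₀ ∈ X, and a set X_INF ⊆ X such that the trajectory x_{k+1} = f(x_k) visits X_INF infinitely often, yet the gaps between consecutive visits to X_INF are unbounded; consequently, for every ξ > 0 and every bounded function T : X × X → ℝ, the conditions (1) T(x, f(x)) ≥ 0 for all x; (2) T(f(x), y) ≥ 0 implies T(x, y) ≥ 0 for all x, y; and (3) for all y ∉ X_INF, T(x₀, y) ≥ 0 and T(y, f(y)) ≥ 0 imply T(x₀, f(y)) ≥ T(x₀, y) + ξ, cannot all hold. -/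
/-!
Conditions (1) and (2) make `T x₀ (f^[k] x₀)` nonnegative for every `k ≥ 1`, and then (3)
forces it to grow by `ξ` at each step spent outside `XINF`. A gap of length `N` between visits
therefore pushes `T` up to at least `N * ξ`, so unbounded gaps are incompatible with `T`
being bounded above. The trajectory `0, 1, 2, …` of the successor map, with `XINF` the powers
of two, has such gaps while visiting `XINF` infinitely often.
-/

open Function

def IsRecurrenceCertificate {X : Type*} (f : X → X) (x₀ : X) (XINF : Set X) (ξ : ℝ)
    (T : X → X → ℝ) : Prop :=
  (∀ x : X, T x (f x) ≥ 0) ∧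
  (∀ x y : X, T (f x) y ≥ 0 → T x y ≥ 0) ∧
  (∀ y : X, y ∉ XINF → T x₀ y ≥ 0 → T y (f y) ≥ 0 → T x₀ (f y) ≥ T x₀ y + ξ)

namespace IsRecurrenceCertificate

variable {X : Type*} {f : X → X} {x₀ : X} {XINF : Set X} {ξ : ℝ} {T : X → X → ℝ}

theorem nonneg_iterate_succ (hT : IsRecurrenceCertificate f x₀ XINF ξ T) :
    ∀ (n : ℕ) (x : X), 0 ≤ T x (f^[n + 1] x)
  | 0, x => hT.1 x
  | n + 1, x => hT.2.1 x _ <| by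
      rw [iterate_succ_apply]
      exact nonneg_iterate_succ hT n (f x)

theorem mul_le_of_gap (hT : IsRecurrenceCertificate f x₀ XINF ξ T) (hξ : 0 ≤ ξ) {k N : ℕ}
    (hk : 0 ≤ T x₀ (f^[k] x₀)) (hgap : ∀ m < N, f^[k + m] x₀ ∉ XINF) :
    ∀ j ≤ N, j * ξ ≤ T x₀ (f^[k + j] x₀)
  | 0, _ => by simpa using hk
  | j + 1, hj => by
      have ih := mul_le_of_gap hT hξ hk hgap j (by omega)
      have hstep := hT.2.2 _ (hgap j (by omega)) (le_trans (by positivity) ih) (hT.1 _)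
      rw [← add_assoc, iterate_succ_apply']
      push_cast
      linarith

theorem not_of_unbounded_gaps (hT : IsRecurrenceCertificate f x₀ XINF ξ T) (hξ : 0 < ξ)
    (hgaps : ∀ N : ℕ, ∃ k : ℕ, ∀ m < N, f^[k + m] x₀ ∉ XINF) {u : ℝ}
    (hu : ∀ x y : X, T x y ≤ u) : False := by
  obtain ⟨N, hN⟩ := exists_nat_gt (u / ξ)
  obtain ⟨k, hk⟩ := hgaps (N + 1)
  have hgap : ∀ m < N, f^[k + 1 + m] x₀ ∉ XINF := fun m hm => by
    simpa [add_assoc, add_comm 1] using hk (m + 1) (by omega)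
  have hgrow := hT.mul_le_of_gap hξ.le (hT.nonneg_iterate_succ k x₀) hgap N le_rfl
  have hNξ : u < N * ξ := (div_lt_iff₀ hξ).mp hN
  linarith [hu x₀ (f^[k + 1 + N] x₀)]

end IsRecurrenceCertificate

theorem Nat.notMem_range_two_pow_of_lt_of_lt {N n : ℕ} (hlo : 2 ^ N < n) (hhi : n < 2 ^ (N + 1)) :
    n ∉ Set.range (2 ^ · : ℕ → ℕ) := by
  rintro ⟨e, rfl⟩
  have hNe : N < e := (Nat.pow_lt_pow_iff_right (by norm_num)).mp hlo
  have heN : e < N + 1 := (Nat.pow_lt_pow_iff_right (by norm_num)).mp hhi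
  omega

theorem recurrence_certificate_incomplete :
    ∃ (X : Type) (f : X → X) (x₀ : X) (XINF : Set X),
      {k : ℕ | f^[k] x₀ ∈ XINF}.Infinite ∧
      (∀ N : ℕ, ∃ k : ℕ, ∀ m : ℕ, m < N → f^[k + m] x₀ ∉ XINF) ∧
      ∀ ξ : ℝ, ξ > 0 → ∀ T : X → X → ℝ,
        (∃ l u : ℝ, ∀ x y : X, l ≤ T x y ∧ T x y ≤ u) →
        ¬ ((∀ x : X, T x (f x) ≥ 0) ∧
           (∀ x y : X, T (f x) y ≥ 0 → T x y ≥ 0) ∧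
           (∀ y : X, y ∉ XINF → T x₀ y ≥ 0 → T y (f y) ≥ 0 →
             T x₀ (f y) ≥ T x₀ y + ξ)) := by
  have hgaps : ∀ N : ℕ, ∃ k : ℕ, ∀ m : ℕ, m < N →
      Nat.succ^[k + m] 0 ∉ Set.range (2 ^ · : ℕ → ℕ) := fun N =>
    ⟨2 ^ N + 1, fun m hm => by
      rw [Nat.succ_iterate, zero_add]
      have := N.lt_two_pow_self
      exact Nat.notMem_range_two_pow_of_lt_of_lt (N := N) (by omega) (by rw [pow_succ]; omega)⟩
  refine ⟨ℕ, Nat.succ, 0, Set.range (2 ^ ·), ?_, hgaps, ?_⟩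
  · simpa only [Nat.succ_iterate, zero_add, Set.ofPred_mem_eq] using
      Set.infinite_range_of_injective (Nat.pow_right_injective le_rfl)
  · rintro ξ hξ T ⟨_, u, hT⟩ hcert
    exact IsRecurrenceCertificate.not_of_unbounded_gaps hcert hξ hgaps fun x y => (hT x y).2
end

section
/- Let A be a type, R ⊆ A × A, and B ⊆ A. Say R is well-founded with respect to B if no infinite R-chain ⟨a₀, a₁, …⟩ (with (a_i, a_{i+1}) ∈ R for all i) has infinitely many terms in B. If there exist ξ > 0 and V : A → ℝ bounded from below such that for all b, b' ∈ B, whenever b' is reachable from b via R⁺ (the transitive closure) we have V(b') ≤ V(b) − ξ, then R is well-founded with respect to B. -/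
/-! The visits of the chain to `B` form a subsequence along which consecutive terms are linked by
`R⁺`, so `V` drops by at least `ξ` at each visit. Infinitely many visits would push `V` below any
bound. -/

section

variable {α : Type*} [AddCommGroup α] [LinearOrder α] [IsOrderedAddMonoid α]

theorem le_sub_nsmul_of_forall_succ_le_sub {u : ℕ → α} {ξ : α} (h : ∀ n, u (n + 1) ≤ u n - ξ)
    (n : ℕ) : u n ≤ u 0 - n • ξ := by
  induction n with
  | zero => simp
  | succ n ih =>
    calc u (n + 1) ≤ u n - ξ := h n
      _ ≤ u 0 - n • ξ - ξ := sub_le_sub_right ih ξ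
      _ = u 0 - (n + 1) • ξ := by rw [succ_nsmul, sub_sub]

theorem not_bddBelow_range_of_forall_succ_le_sub [Archimedean α] {u : ℕ → α} {ξ : α}
    (hξ : 0 < ξ) (h : ∀ n, u (n + 1) ≤ u n - ξ) : ¬ BddBelow (Set.range u) := by
  rintro ⟨l, hl⟩
  obtain ⟨n, hn⟩ := Archimedean.arch (u 0 - l) hξ
  have hl_lt : l < l := calc
    l ≤ u (n + 1) := hl ⟨n + 1, rfl⟩
    _ ≤ u 0 - (n + 1) • ξ := le_sub_nsmul_of_forall_succ_le_sub h (n + 1)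
    _ = u 0 - n • ξ - ξ := by rw [succ_nsmul, sub_sub]
    _ < u 0 - n • ξ := sub_lt_self _ hξ
    _ ≤ l := sub_le_comm.mp hn
  exact lt_irrefl l hl_lt

end

theorem wf_with_respect_to_set {A : Type*} (R : A → A → Prop) (B : Set A)
    (ξ : ℝ) (hξ : ξ > 0) (V : A → ℝ)
    (hbdd : ∃ l : ℝ, ∀ a : A, l ≤ V a)
    (hdec : ∀ b ∈ B, ∀ b' ∈ B, Relation.TransGen R b b' → V b' ≤ V b - ξ) :
    ∀ a : ℕ → A, (∀ i : ℕ, R (a i) (a (i + 1))) → ¬ {i : ℕ | a i ∈ B}.Infinite := by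
  intro a hchain hinf
  obtain ⟨l, hl⟩ := hbdd
  set visit := Nat.nth (fun i => a i ∈ B)
  have hvisit_mem (n : ℕ) : a (visit n) ∈ B := Nat.nth_mem_of_infinite hinf n
  have hvisit_mono : StrictMono visit := Nat.nth_strictMono hinf
  have hreach {i j : ℕ} (hij : i < j) : Relation.TransGen R (a i) (a j) :=
    Nat.rel_of_forall_rel_succ_of_lt _ (fun n => .single (hchain n)) hij
  refine not_bddBelow_range_of_forall_succ_le_sub hξ (u := fun n => V (a (visit n)))
    (fun n => hdec _ (hvisit_mem n) _ (hvisit_mem (n + 1)) (hreach (hvisit_mono n.lt_succ_self)))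
    ⟨l, ?_⟩
  rintro _ ⟨n, rfl⟩
  exact hl _
end
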